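/- arXiv:2107.00957 — 2 statements merged into one kernel-verified Lean document; each statement's English description precedes it below -/
import Mathlib

section
/- Let ρ, η, L > 0 and let Φ be a differentiable convex function on an open convex set D ⊆ ℝ^N, with Bregman divergence D_Φ(a,b) = Φ(a) − Φ(b) − ⟨∇Φ(b), a − b⟩. Let y, z ∈ D and g ∈ ℝ^N satisfy ∇Φ(z) = ∇Φ(y) + η g, ‖g‖_∞ ≤ L, and D_Φ(z, y) ≥ (ρ/2)‖z − y‖_1². Then D_Φ(y, z) ≤ η² L² / (2ρ). -/
/-!
Adding the two Bregman divergences between `y` and `z` cancels the values of `Φ` and leaves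
`⟨∇Φ z - ∇Φ y, z - y⟩ = η ⟨g, z - y⟩ ≤ η L s`, where `s = ‖z - y‖₁` (Hölder for `ℓ∞`/`ℓ¹`).
Strong convexity bounds `DΦ z y` below by `ρ s² / 2`, so `DΦ y z ≤ η L s - ρ s² / 2`, and the
maximum of this quadratic in `s` is `η² L² / (2ρ)`.
-/

open Finset

section Bregman

variable {E : Type*} [NormedAddCommGroup E] [NormedSpace ℝ E]

noncomputable def bregmanDiv (Φ : E → ℝ) (a b : E) : ℝ :=
  Φ a - Φ b - fderiv ℝ Φ b (a - b)

theorem bregmanDiv_add_bregmanDiv_swap (Φ : E → ℝ) (a b : E) :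
    bregmanDiv Φ a b + bregmanDiv Φ b a = fderiv ℝ Φ a (a - b) - fderiv ℝ Φ b (a - b) := by
  rw [bregmanDiv, bregmanDiv, ← neg_sub a b, map_neg]
  ring

end Bregman

theorem sum_mul_le_mul_sum_abs {ι : Type*} (s : Finset ι) {g v : ι → ℝ} {L : ℝ}
    (hg : ∀ i ∈ s, |g i| ≤ L) : ∑ i ∈ s, g i * v i ≤ L * ∑ i ∈ s, |v i| := by
  rw [mul_sum]
  refine sum_le_sum fun i hi => ?_
  calc g i * v i ≤ |g i| * |v i| := by rw [← abs_mul]; exact le_abs_self _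
    _ ≤ L * |v i| := mul_le_mul_of_nonneg_right (hg i hi) (abs_nonneg _)

theorem mul_sub_half_mul_sq_le {ρ : ℝ} (hρ : 0 < ρ) (c s : ℝ) :
    c * s - ρ / 2 * s ^ 2 ≤ c ^ 2 / (2 * ρ) := by
  rw [le_div_iff₀ (by positivity)]
  nlinarith [sq_nonneg (ρ * s - c)]

theorem mirror_step_bregman_bound_general
    (N : ℕ) (ρ η L : ℝ) (hρ : 0 < ρ) (hη : 0 < η)
    (Φ : ((Fin N) → ℝ) → ℝ)
    (DΦ : ((Fin N) → ℝ) → ((Fin N) → ℝ) → ℝ)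
    (hDΦ : ∀ a b, DΦ a b = Φ a - Φ b - fderiv ℝ Φ b (a - b))
    (y z : (Fin N) → ℝ) (g : (Fin N) → ℝ)
    (hgrad : ∀ v : (Fin N) → ℝ,
      fderiv ℝ Φ z v = fderiv ℝ Φ y v + η * ∑ i, g i * v i)
    (hgbound : ∀ i, |g i| ≤ L)
    (hstrong : ρ / 2 * (∑ i, |z i - y i|) ^ 2 ≤ DΦ z y) :
    DΦ y z ≤ η ^ 2 * L ^ 2 / (2 * ρ) := by
  obtain rfl : DΦ = bregmanDiv Φ := funext₂ hDΦ
  set s := ∑ i, |z i - y i|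
  have hsym : bregmanDiv Φ y z + bregmanDiv Φ z y = η * ∑ i, g i * (z i - y i) := by
    rw [add_comm, bregmanDiv_add_bregmanDiv_swap, hgrad]
    simp only [Pi.sub_apply, add_sub_cancel_left]
  have hpair : ∑ i, g i * (z i - y i) ≤ L * s :=
    sum_mul_le_mul_sum_abs _ fun i _ => hgbound i
  calc bregmanDiv Φ y z ≤ (η * L) * s - ρ / 2 * s ^ 2 := by
        linarith [mul_le_mul_of_nonneg_left hpair hη.le]
    _ ≤ η ^ 2 * L ^ 2 / (2 * ρ) := by
        rw [← mul_pow]; exact mul_sub_half_mul_sq_le hρ _ _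

/-- **One-step Bregman bound for a mirror step.**
Let `ρ, η, L > 0` and `Φ` a differentiable convex function on an open convex set
`D ⊆ ℝ^N`, with Bregman divergence `DΦ a b = Φ a - Φ b - ⟨∇Φ b, a - b⟩`.
If `y, z ∈ D` and `g ∈ ℝ^N` satisfy `∇Φ z = ∇Φ y + η • g`, `‖g‖_∞ ≤ L`, and
`DΦ z y ≥ (ρ/2) ‖z - y‖₁²`, then `DΦ y z ≤ η² L² / (2 ρ)`. -/
theorem mirror_step_bregman_bound
    (N : ℕ) (ρ η L : ℝ) (hρ : 0 < ρ) (hη : 0 < η) (hL : 0 < L)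
    (D : Set ((Fin N) → ℝ)) (hDopen : IsOpen D) (hDconv : Convex ℝ D)
    (Φ : ((Fin N) → ℝ) → ℝ)
    (hΦdiff : DifferentiableOn ℝ Φ D) (hΦconv : ConvexOn ℝ D Φ)
    (DΦ : ((Fin N) → ℝ) → ((Fin N) → ℝ) → ℝ)
    (hDΦ : ∀ a b, DΦ a b = Φ a - Φ b - fderiv ℝ Φ b (a - b))
    (y z : (Fin N) → ℝ) (g : (Fin N) → ℝ)
    (hyD : y ∈ D) (hzD : z ∈ D)
    (hgrad : ∀ v : (Fin N) → ℝ,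
      fderiv ℝ Φ z v = fderiv ℝ Φ y v + η * ∑ i, g i * v i)
    (hgbound : ∀ i, |g i| ≤ L)
    (hstrong : ρ / 2 * (∑ i, |z i - y i|) ^ 2 ≤ DΦ z y) :
    DΦ y z ≤ η ^ 2 * L ^ 2 / (2 * ρ) :=
  mirror_step_bregman_bound_general N ρ η L hρ hη Φ DΦ hDΦ y z g hgrad hgbound hstrong
end

section
/- For every fractional cache state y, the caching gain is at most (1 − 1/e)^{−1} times the auxiliary gain: G(y) ≤ (1 − 1/e)^{−1} · L(y). -/
namespace ACAI

/-- `sigma N π i` = number of indices `j ∈ {1,…,i}` with `π j > N`, i.e. the number of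
objects among the `i` cheapest that are served from the server. -/
def sigma (N : ℕ) (π : ℕ → ℕ) (i : ℕ) : ℕ :=
  ((Finset.Icc 1 i).filter (fun j => N < π j)).card

/-- `Kmin N k π` = least index `i` with `sigma N π i = k`. -/
noncomputable def Kmin (N k : ℕ) (π : ℕ → ℕ) : ℕ :=
  sInf {i | sigma N π i = k}

/-- `alpha c π i = c (π (i+1)) - c (π i)`. -/
noncomputable def alpha (c : ℕ → ℝ) (π : ℕ → ℕ) (i : ℕ) : ℝ :=
  c (π (i + 1)) - c (π i)

/-- A fractional cache state: `y ∈ [0,1]^{2N}` with `∑_{i=1}^{N} y i = h` and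
`y (i+N) = 1 - y i` for `i ∈ {1,…,N}`. -/
def IsFrac (N h : ℕ) (y : ℕ → ℝ) : Prop :=
  (∀ i ∈ Finset.Icc 1 (2 * N), y i ∈ Set.Icc (0 : ℝ) 1) ∧
  (∑ i ∈ Finset.Icc 1 N, y i = (h : ℝ)) ∧
  (∀ i ∈ Finset.Icc 1 N, y (i + N) = 1 - y i)

/-- An integral cache state: a fractional cache state with `{0,1}` coordinates. -/
def IsInt (N h : ℕ) (y : ℕ → ℝ) : Prop :=
  IsFrac N h y ∧ ∀ i ∈ Finset.Icc 1 (2 * N), y i = 0 ∨ y i = 1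

/-- A request over the augmented catalog `U = {1,…,2N}`: nonnegative costs `c` with
`c (i+N) = c i + cf` for catalog objects `i ∈ {1,…,N}`, and a bijection `π` of
`{1,…,2N}` sorting the costs nondecreasingly and placing each `i ∈ {1,…,N}` before
`i + N`. -/
def Request (N : ℕ) (cf : ℝ) (c : ℕ → ℝ) (π : ℕ → ℕ) : Prop :=
  (∀ i ∈ Finset.Icc 1 (2 * N), 0 ≤ c i) ∧
  (∀ i ∈ Finset.Icc 1 N, c (i + N) = c i + cf) ∧
  Set.BijOn π (Set.Icc 1 (2 * N)) (Set.Icc 1 (2 * N)) ∧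
  (∀ i, 1 ≤ i → i < 2 * N → c (π i) ≤ c (π (i + 1))) ∧
  (∀ j l, j ∈ Set.Icc 1 (2 * N) → l ∈ Set.Icc 1 (2 * N) →
    π j ≤ N → π l = π j + N → j < l)

/-- The caching gain
`G(y) = ∑_{i=1}^{K-1} α_i · min { k - σ_i, (∑_{j=1}^{i} y_{π j}) - σ_i }`. -/
noncomputable def gain (N k : ℕ) (c : ℕ → ℝ) (π : ℕ → ℕ) (y : ℕ → ℝ) : ℝ :=
  ∑ i ∈ Finset.Icc 1 (Kmin N k π - 1),
    alpha c π i *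
      min ((k : ℝ) - sigma N π i) ((∑ j ∈ Finset.Icc 1 i, y (π j)) - sigma N π i)

open Classical in
/-- `Iset N π i = { j ∈ {1,…,i} : π j ≤ N and π j + N ∉ {π 1, …, π i} }`. -/
noncomputable def Iset (N : ℕ) (π : ℕ → ℕ) (i : ℕ) : Finset ℕ :=
  (Finset.Icc 1 i).filter (fun j => π j ≤ N ∧ ∀ l ∈ Finset.Icc 1 i, π l ≠ π j + N)

/-- The auxiliary (multilinear) gain
`L(y) = ∑_{i=1}^{K-1} α_i (k - σ_i) (1 - ∏_{j ∈ I_i} (1 - y_{π j}/(k - σ_i)))`. -/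
noncomputable def aux (N k : ℕ) (c : ℕ → ℝ) (π : ℕ → ℕ) (y : ℕ → ℝ) : ℝ :=
  ∑ i ∈ Finset.Icc 1 (Kmin N k π - 1),
    alpha c π i * ((k : ℝ) - sigma N π i) *
      (1 - ∏ j ∈ Iset N π i, (1 - y (π j) / ((k : ℝ) - sigma N π i)))

/-! Each summand of `G` is compared with the matching summand of `L`. Put `b = k - σ_i`.
Among the first `i` objects, every pair `{u, u + N}` carries mass exactly `1` and every other
server copy at most `1`, so `∑_{j ≤ i} y_{π j} - σ_i ≤ T := ∑_{j ∈ I_i} y_{π j}`. Since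
`∏ (1 - y/b) ≤ exp (-T/b)` and `t ↦ 1 - exp (-t)` is concave,
`(1 - 1/e) min b T ≤ b (1 - exp (-T/b)) ≤ b (1 - ∏ (1 - y/b))`. -/

open Finset

section

open Real

lemma one_sub_inv_exp_mul_min_le {t : ℝ} (ht : 0 ≤ t) :
    (1 - 1 / exp 1) * min 1 t ≤ 1 - exp (-t) := by
  have he : 1 / exp 1 = exp (-1) := by rw [exp_neg, one_div]
  rw [he]
  rcases le_total t 1 with ht1 | ht1
  · have hchord : exp (-t) ≤ (1 - t) + t * exp (-1) := by
      simpa using convexOn_exp.2 (Set.mem_univ 0) (Set.mem_univ (-1)) (sub_nonneg.2 ht1) ht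
        (by ring)
    rw [min_eq_right ht1]
    linarith
  · rw [min_eq_left ht1]
    linarith [exp_le_exp.2 (neg_le_neg ht1)]

lemma prod_one_sub_le_exp_neg_sum {ι : Type*} (s : Finset ι) (x : ι → ℝ)
    (hx : ∀ i ∈ s, x i ≤ 1) :
    ∏ i ∈ s, (1 - x i) ≤ exp (-∑ i ∈ s, x i) := by
  rw [← sum_neg_distrib, exp_sum]
  exact prod_le_prod (fun i hi => sub_nonneg.2 (hx i hi)) fun i _ => one_sub_le_exp_neg (x i)

lemma one_sub_inv_exp_mul_min_sum_le {ι : Type*} {b : ℝ} (hb : 0 < b) (s : Finset ι)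
    (w : ι → ℝ) (hw : ∀ j ∈ s, w j ∈ Set.Icc 0 b) :
    (1 - 1 / exp 1) * min b (∑ j ∈ s, w j) ≤ b * (1 - ∏ j ∈ s, (1 - w j / b)) := by
  set T := ∑ j ∈ s, w j
  have hT : 0 ≤ T / b := div_nonneg (sum_nonneg fun j hj => (hw j hj).1) hb.le
  have hprod : ∏ j ∈ s, (1 - w j / b) ≤ exp (-(T / b)) := by
    rw [sum_div]
    exact prod_one_sub_le_exp_neg_sum s _ fun j hj => (div_le_one hb).2 (hw j hj).2
  calc (1 - 1 / exp 1) * min b T = b * ((1 - 1 / exp 1) * min 1 (T / b)) := by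
        rw [mul_left_comm, mul_min_of_nonneg _ _ hb.le, mul_one, mul_div_cancel₀ _ hb.ne']
    _ ≤ b * (1 - exp (-(T / b))) :=
        mul_le_mul_of_nonneg_left (one_sub_inv_exp_mul_min_le hT) hb.le
    _ ≤ b * (1 - ∏ j ∈ s, (1 - w j / b)) := by gcongr

end

lemma sum_add_sum_le_card_of_injOn {ι : Type*} [DecidableEq ι] {B C : Finset ι} {f : ι → ι}
    (hf : Set.MapsTo f C B) (hinj : Set.InjOn f C) (w : ι → ℝ)
    (hB : ∀ l ∈ B, w l ≤ 1) (hC : ∀ j ∈ C, w j + w (f j) ≤ 1) :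
    ∑ j ∈ C, w j + ∑ l ∈ B, w l ≤ #B := by
  have hsub : C.image f ⊆ B := image_subset_iff.2 fun j hj => hf hj
  have hpaired : ∑ j ∈ C, w j + ∑ l ∈ C.image f, w l ≤ #(C.image f) := by
    rw [sum_image hinj, ← sum_add_distrib, card_image_of_injOn hinj]
    simpa using sum_le_sum hC
  have hrest : ∑ l ∈ B \ C.image f, w l ≤ #(B \ C.image f) := by
    simpa using sum_le_sum fun l hl => hB l (sdiff_subset hl)
  rw [← sum_sdiff hsub, ← card_sdiff_add_card_eq_card hsub]
  push_cast
  linarith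

lemma sum_sub_card_le_sum_unpaired (S : Finset ℕ) (N : ℕ) (y : ℕ → ℝ) (hS : ∀ u ∈ S, 0 < u)
    (hy : ∀ u ∈ S, y u ≤ 1) (hpair : ∀ u ∈ S, u ≤ N → y u + y (u + N) ≤ 1) :
    ∑ u ∈ S, y u - #(S.filter (N < ·)) ≤
      ∑ u ∈ S.filter (fun u => u ≤ N ∧ u + N ∉ S), y u := by
  set B := S.filter (N < ·)
  set C := S.filter (fun u => u ≤ N ∧ u + N ∈ S)
  have hsplit : ∑ u ∈ S, y u =
      ∑ u ∈ S.filter (fun u => u ≤ N ∧ u + N ∉ S), y u + (∑ u ∈ C, y u + ∑ u ∈ B, y u) := by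
    simp only [B, C, sum_filter, ← sum_add_distrib]
    refine sum_congr rfl fun u _ => ?_
    by_cases hu : u ≤ N <;> by_cases huN : u + N ∈ S <;> simp [hu, huN]
  have hpaired : ∑ u ∈ C, y u + ∑ u ∈ B, y u ≤ #B := by
    refine sum_add_sum_le_card_of_injOn (f := (· + N)) (fun u hu => ?_)
      (fun u _ v _ h => add_right_cancel h) y (fun u hu => hy u (filter_subset _ _ hu))
      fun u hu => hpair u (filter_subset _ _ hu) (mem_filter.1 hu).2.1
    obtain ⟨huS, -, huN⟩ := mem_filter.1 hu
    exact mem_filter.2 ⟨huN, show N < u + N by have := hS u huS; omega⟩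
  linarith

lemma sigma_succ_le (N : ℕ) (π : ℕ → ℕ) (i : ℕ) : sigma N π (i + 1) ≤ sigma N π i + 1 := by
  rw [sigma, sigma, ← insert_Icc_right_eq_Icc_add_one (by omega), filter_insert]
  split_ifs
  · exact card_insert_le _ _
  · exact Nat.le_succ _

lemma sigma_lt_of_lt_Kmin {N k : ℕ} {π : ℕ → ℕ} {i : ℕ} (hi : i < Kmin N k π) :
    sigma N π i < k := by
  have hne : ∀ j < Kmin N k π, sigma N π j ≠ k := fun j hj =>
    Nat.notMem_of_lt_sInf (s := {i | sigma N π i = k}) hj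
  induction i with
  | zero =>
    have := hne 0 hi
    simp only [sigma, zero_lt_one, Icc_eq_empty_of_lt, filter_empty, card_empty] at this ⊢
    omega
  | succ i ih =>
    have := ih (by omega)
    have := sigma_succ_le N π i
    have := hne (i + 1) hi
    omega

lemma sigma_eq_card_filter_image {N : ℕ} {π : ℕ → ℕ} {i : ℕ} (hπ : Set.InjOn π (Icc 1 i)) :
    sigma N π i = #(((Icc 1 i).image π).filter (N < ·)) := by
  rw [filter_image, card_image_of_injOn (hπ.mono (filter_subset _ _))]
  rfl

lemma sigma_two_mul {N : ℕ} {π : ℕ → ℕ}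
    (hbij : Set.BijOn π (Set.Icc 1 (2 * N)) (Set.Icc 1 (2 * N))) : sigma N π (2 * N) = N := by
  have himage : (Icc 1 (2 * N)).image π = Icc 1 (2 * N) := by
    rw [← coe_inj, coe_image, coe_Icc, hbij.image_eq]
  have hupper : (Icc 1 (2 * N)).filter (N < ·) = Icc (N + 1) (2 * N) := by
    ext u
    simp only [mem_filter, mem_Icc]
    omega
  rw [sigma_eq_card_filter_image (by rw [coe_Icc]; exact hbij.injOn), himage, hupper,
    Nat.card_Icc]
  omega

lemma Kmin_le_two_mul {N k : ℕ} {π : ℕ → ℕ} (hkN : k ≤ N)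
    (hbij : Set.BijOn π (Set.Icc 1 (2 * N)) (Set.Icc 1 (2 * N))) : Kmin N k π ≤ 2 * N := by
  by_contra! h
  have := sigma_lt_of_lt_Kmin h
  rw [sigma_two_mul hbij] at this
  omega

lemma sum_sub_sigma_le_sum_Iset {N : ℕ} {π : ℕ → ℕ}
    (hbij : Set.BijOn π (Set.Icc 1 (2 * N)) (Set.Icc 1 (2 * N))) {y : ℕ → ℝ}
    (hy : ∀ u ∈ Icc 1 (2 * N), y u ∈ Set.Icc 0 1) (hpair : ∀ u ∈ Icc 1 N, y (u + N) = 1 - y u)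
    {i : ℕ} (hi : i ≤ 2 * N) :
    ∑ j ∈ Icc 1 i, y (π j) - sigma N π i ≤ ∑ j ∈ Iset N π i, y (π j) := by
  have hinj : Set.InjOn π (Icc 1 i) :=
    hbij.injOn.mono fun j hj => by simp only [coe_Icc, Set.mem_Icc] at hj ⊢; omega
  have hmaps : ∀ u ∈ (Icc 1 i).image π, u ∈ Icc 1 (2 * N) := by
    simp only [mem_image, mem_Icc]
    rintro _ ⟨j, hj, rfl⟩
    exact hbij.mapsTo (by simp only [Set.mem_Icc]; omega)
  have hIset : (Iset N π i).image π =
      ((Icc 1 i).image π).filter (fun u => u ≤ N ∧ u + N ∉ (Icc 1 i).image π) := by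
    rw [filter_image]
    simp [Iset]
  have hIsub : Iset N π i ⊆ Icc 1 i := fun j hj => by
    simp only [Iset, mem_filter] at hj
    exact hj.1
  rw [← sum_image hinj, sigma_eq_card_filter_image hinj, ← sum_image (hinj.mono hIsub), hIset]
  refine sum_sub_card_le_sum_unpaired _ N y (fun u hu => (mem_Icc.1 (hmaps u hu)).1)
    (fun u hu => (hy u (hmaps u hu)).2) fun u hu huN => ?_
  rw [hpair u (mem_Icc.2 ⟨(mem_Icc.1 (hmaps u hu)).1, huN⟩)]
  linarith

lemma one_sub_inv_exp_pos : 0 < 1 - 1 / Real.exp 1 := by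
  rw [sub_pos, div_lt_one (Real.exp_pos 1), Real.one_lt_exp_iff]
  exact one_pos

lemma gain_summand_le {N k h : ℕ} {cf : ℝ} {c : ℕ → ℝ} {π : ℕ → ℕ} {y : ℕ → ℝ}
    (hreq : Request N cf c π) (hy : IsFrac N h y) (hkN : k ≤ N)
    {i : ℕ} (hi : i ∈ Icc 1 (Kmin N k π - 1)) :
    alpha c π i * min ((k : ℝ) - sigma N π i) (∑ j ∈ Icc 1 i, y (π j) - sigma N π i) ≤
      (1 - 1 / Real.exp 1)⁻¹ * (alpha c π i * ((k : ℝ) - sigma N π i) *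
        (1 - ∏ j ∈ Iset N π i, (1 - y (π j) / ((k : ℝ) - sigma N π i)))) := by
  obtain ⟨-, -, hbij, hsorted, -⟩ := hreq
  obtain ⟨hy01, -, hpair⟩ := hy
  have hiK : i < Kmin N k π := by rw [mem_Icc] at hi; omega
  have hi2N : i < 2 * N := hiK.trans_le (Kmin_le_two_mul hkN hbij)
  have hα : 0 ≤ alpha c π i := sub_nonneg.2 (hsorted i (mem_Icc.1 hi).1 hi2N)
  set b : ℝ := k - sigma N π i
  have hb : 1 ≤ b := by
    simp only [b, le_sub_iff_add_le']
    exact_mod_cast sigma_lt_of_lt_Kmin hiK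
  have hw : ∀ j ∈ Iset N π i, y (π j) ∈ Set.Icc 0 b := fun j hj => by
    simp only [Iset, mem_filter, mem_Icc] at hj
    have := hy01 (π j) (mem_Icc.2 (hbij.mapsTo ⟨hj.1.1, by omega⟩))
    exact ⟨this.1, this.2.trans hb⟩
  have hmin : min b (∑ j ∈ Icc 1 i, y (π j) - sigma N π i) ≤
      (1 - 1 / Real.exp 1)⁻¹ * (b * (1 - ∏ j ∈ Iset N π i, (1 - y (π j) / b))) := by
    rw [le_inv_mul_iff₀ one_sub_inv_exp_pos]
    refine le_trans ?_ (one_sub_inv_exp_mul_min_sum_le (by linarith) _ _ hw)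
    exact mul_le_mul_of_nonneg_left
      (min_le_min_left b (sum_sub_sigma_le_sum_Iset hbij hy01 hpair hi2N.le))
      one_sub_inv_exp_pos.le
  calc alpha c π i * min b (∑ j ∈ Icc 1 i, y (π j) - sigma N π i)
      ≤ alpha c π i * ((1 - 1 / Real.exp 1)⁻¹ *
          (b * (1 - ∏ j ∈ Iset N π i, (1 - y (π j) / b)))) := by gcongr
    _ = _ := by ring

theorem gain_le_inv_aux_general
    (N k h : ℕ) (hkh : k ≤ h) (hhN : h ≤ N)
    (cf : ℝ) (c : ℕ → ℝ) (π : ℕ → ℕ)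
    (hreq : Request N cf c π)
    (y : ℕ → ℝ) (hy : IsFrac N h y) :
    gain N k c π y ≤ (1 - 1 / Real.exp 1)⁻¹ * aux N k c π y := by
  rw [gain, aux, mul_sum]
  exact sum_le_sum fun i hi => gain_summand_le hreq hy (hkh.trans hhN) hi

/-- **Upper bound (Proposition 1, second inequality).**
For every fractional cache state `y`, the caching gain is at most `(1 - 1/e)⁻¹` times
the auxiliary gain: `G(y) ≤ (1 - 1/e)⁻¹ · L(y)`. -/
theorem gain_le_inv_aux
    (N k h : ℕ) (hN : 0 < N) (hk : 0 < k) (hkh : k ≤ h) (hhN : h ≤ N)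
    (cf : ℝ) (hcf : 0 < cf) (c : ℕ → ℝ) (π : ℕ → ℕ)
    (hreq : Request N cf c π)
    (y : ℕ → ℝ) (hy : IsFrac N h y) :
    gain N k c π y ≤ (1 - 1 / Real.exp 1)⁻¹ * aux N k c π y :=
  gain_le_inv_aux_general N k h hkh hhN cf c π hreq y hy

end ACAI
end
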